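/- Let l be an odd positive integer. With the blocked formalism over R_l = F_2[X^{±1},Y^{±1}] (X = x^l, Y = y^l): suppose P, Q ∈ Mat_{l²}(R_l) satisfy P(1+T_y†) = (1+T_y)P†, Q(1+T_x†) = (1+T_x)Q†, and T_y U^{-1} + P(1+T_x†) = T_x† U + (1+T_y)Q†, where U represents multiplication by a monomial u = x^a y^b. Then setting p = φ(P), q = φ(Q) with φ(M) = b·M·b†, we obtain p = y·p̄, q = x·q̄, and (1+x)p + (1+y)q = u + xy·u^{-1} in R_1 = F_2[x^{±1},y^{±1}]; consequently no such P, Q exist. -/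

import Mathlib

open AddMonoidAlgebra

/-- The Laurent polynomial ring `R = F₂[x^{±1}, y^{±1}]`, realized as the group algebra
of `ℤ × ℤ` over `F₂`; the monomial `x^a y^b` corresponds to `single (a, b) 1`. -/
abbrev R2 : Type := AddMonoidAlgebra (ZMod 2) (ℤ × ℤ)

/-- The monomial `x^a y^b` in `R2`. -/
noncomputable def mono (a b : ℤ) : R2 := AddMonoidAlgebra.single (a, b) 1

/-- The antipode map `x ↦ x⁻¹`, `y ↦ y⁻¹`, the `F₂`-algebra involution induced by
negation on the exponent group `ℤ × ℤ`. -/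
noncomputable def bar (f : R2) : R2 :=
  AddMonoidAlgebra.domCongr (ZMod 2) (ZMod 2) (AddEquiv.neg (ℤ × ℤ)) f

/-- Antipode-transpose (`†`) of a matrix over `R2`. -/
noncomputable def dag {α β : Type*} (M : Matrix α β R2) : Matrix β α R2 :=
  (M.map bar).transpose

/-- The inclusion `R_l = F₂[X^{±1},Y^{±1}] → R₁`, `X ↦ x^l`, `Y ↦ y^l`: on exponents it is
`(a, b) ↦ (l·a, l·b)`. We realize `R_l` as a copy of `R2` and `ι l` as the corresponding
algebra embedding. -/
noncomputable def iota (l : ℕ) : R2 → R2 :=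
  AddMonoidAlgebra.mapDomainAlgHom (ZMod 2) (ZMod 2)
    (AddMonoidHom.mk' (fun p : ℤ × ℤ => ((l : ℤ) * p.1, (l : ℤ) * p.2))
      (fun p q => by simp [Prod.ext_iff, mul_add]))

/-- The basis `b = (x^i y^j)_{0 ≤ i, j < l}` of `R₁` over `R_l`. -/
noncomputable def bvec (l : ℕ) (p : Fin l × Fin l) : R2 := mono (p.1 : ℤ) (p.2 : ℤ)

/-- `T` is the matrix over `R_l` representing multiplication by `g` on `R₁` in the basis
`b`, i.e. `b·T = g·b`. -/
def RepBy (l : ℕ) (T : Matrix (Fin l × Fin l) (Fin l × Fin l) R2) (g : R2) : Prop :=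
  ∀ q, (∑ p, bvec l p * iota l (T p q)) = g * bvec l q

/-- `φ(M) = b·M·b†`. -/
noncomputable def phi (l : ℕ) (M : Matrix (Fin l × Fin l) (Fin l × Fin l) R2) : R2 :=
  ∑ p, ∑ q, bvec l p * iota l (M p q) * bar (bvec l q)

/-!
Applying `φ` turns the matrix identities into identities in `R₁`: `φ` is additive,
`φ(T M) = g φ(M)` and `φ(M T†) = φ(M) ḡ` when `T` represents `g` (in which case `T†` represents
`ḡ`), `φ(M†)` is the antipode of `φ(M)`, and `φ(1) = l² = 1` because `l` is odd. Cancelling the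
non-zero-divisors `1 + y` and `1 + x` gives `p = y p̄` and `q = x q̄`, and then the off-diagonal
condition becomes `(1 + x) p + (1 + y) q = u + xy u⁻¹`.

This identity fails by a parity count. Let `λ(f)` be the sum of the coefficients of `f` at the
exponents `(m, n)` with `m ≥ 1`. Then `λ((1 + y) q) = 0`, and `λ((1 + x) p)` is the sum of the
coefficients of `p` on the line `m = 0`, which vanishes because `p = y p̄` pairs `(0, n)` with
`(0, 1 - n) ≠ (0, n)`. But `λ(u + xy u⁻¹) = 1`, since exactly one of `a ≥ 1` and `1 - a ≥ 1` holds.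
-/

open Matrix

instance : CharP R2 2 := charP_of_injective_algebraMap' (ZMod 2) 2

lemma mono_mul (a b c d : ℤ) : mono a b * mono c d = mono (a + c) (b + d) := by
  simp [mono, single_mul_single]

lemma mono_mul_mono_neg (a b : ℤ) : mono a b * mono (-a) (-b) = 1 := by
  rw [mono_mul, add_neg_cancel, add_neg_cancel]
  rfl

lemma coeff_mul_mono (f : R2) (a b : ℤ) (w : ℤ × ℤ) :
    (f * mono a b).coeff w = f.coeff (w.1 - a, w.2 - b) := by
  rw [mono, coeff_mul_single_apply, mul_one]
  rfl

lemma one_add_mono_ne_zero {a b : ℤ} (h : (a, b) ≠ 0) : 1 + mono a b ≠ 0 := by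
  intro h0
  have := congrArg (fun f : R2 => f.coeff (a, b)) h0
  simp [mono, one_def, h.symm] at this

lemma bar_add (f g : R2) : bar (f + g) = bar f + bar g := map_add _ f g

lemma bar_mul (f g : R2) : bar (f * g) = bar f * bar g := map_mul _ f g

lemma bar_sum {ι : Type*} (s : Finset ι) (f : ι → R2) :
    bar (∑ i ∈ s, f i) = ∑ i ∈ s, bar (f i) := map_sum _ f s

lemma bar_single (v : ℤ × ℤ) (r : ZMod 2) : bar (single v r) = single (-v) r := by
  simp [bar]

lemma bar_mono (a b : ℤ) : bar (mono a b) = mono (-a) (-b) := bar_single _ _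

lemma coeff_bar (f : R2) (v : ℤ × ℤ) : (bar f).coeff v = f.coeff (-v) := by
  simp [bar]

lemma bar_bar (f : R2) : bar (bar f) = f := by
  ext v
  simp [coeff_bar]

lemma iota_zero (l : ℕ) : iota l 0 = 0 := map_zero _

lemma iota_one (l : ℕ) : iota l 1 = 1 := map_one _

lemma iota_add (l : ℕ) (f g : R2) : iota l (f + g) = iota l f + iota l g := map_add _ f g

lemma iota_bar (l : ℕ) (f : R2) : iota l (bar f) = bar (iota l f) := by
  induction f using AddMonoidAlgebra.induction_linear with
  | zero => simp [bar, iota]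
  | add f g hf hg => rw [bar_add, iota_add, iota_add, bar_add, hf, hg]
  | single v r => simp [bar, iota, mapDomain_single]

lemma coeff_iota_mul {l : ℕ} (hl : 0 < l) (f : R2) (v : ℤ × ℤ) :
    (iota l f).coeff (l * v.1, l * v.2) = f.coeff v := by
  have hinj : Function.Injective fun v : ℤ × ℤ => ((l : ℤ) * v.1, (l : ℤ) * v.2) := by
    intro v w h
    simp only [Prod.mk.injEq, mul_eq_mul_left_iff, Nat.cast_eq_zero, hl.ne', or_false] at h
    exact Prod.ext h.1 h.2
  exact Finsupp.mapDomain_apply hinj f.coeff v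

lemma coeff_iota_of_notMem {l : ℕ} (f : R2) {w : ℤ × ℤ}
    (hw : ∀ v : ℤ × ℤ, (l * v.1, l * v.2) ≠ w) : (iota l f).coeff w = 0 :=
  Finsupp.mapDomain_of_notMem_range _ _ fun ⟨v, hv⟩ => hw v hv

lemma dag_mul {ι : Type*} [Fintype ι] (A B : Matrix ι ι R2) : dag (A * B) = dag B * dag A := by
  rw [dag, dag, dag, ← transpose_mul]
  congr 1
  exact Matrix.map_mul (f := AddMonoidAlgebra.domCongr (ZMod 2) (ZMod 2) (AddEquiv.neg (ℤ × ℤ)))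

lemma dag_dag {ι : Type*} (A : Matrix ι ι R2) : dag (dag A) = A := by
  ext
  simp [dag, bar_bar]

lemma Fin.eq_of_sub_eq_mul {l : ℕ} {i j : Fin l} {k : ℤ} (h : (i : ℤ) - j = l * k) : i = j := by
  have hij : (i : ℤ) - j = 0 :=
    Int.eq_zero_of_abs_lt_dvd ⟨k, h⟩ (abs_sub_lt_iff.2 ⟨by omega, by omega⟩)
  omega

lemma Fin.exists_eq_add_mul {l : ℕ} (hl : 0 < l) (z : ℤ) :
    ∃ (i : Fin l) (k : ℤ), z = i + l * k := by
  have h0 := Int.emod_nonneg z (by omega : (l : ℤ) ≠ 0)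
  have h1 := Int.emod_lt_of_pos z (by omega : (0 : ℤ) < l)
  exact ⟨⟨(z % l).toNat, by omega⟩, z / l, by simp [Int.toNat_of_nonneg h0, Int.emod_add_mul_ediv]⟩

section RepBy

variable {l : ℕ} {T : Matrix (Fin l × Fin l) (Fin l × Fin l) R2} {g : R2}

lemma coeff_sum_bvec_mul_iota (hl : 0 < l) (c : Fin l × Fin l → R2) (p : Fin l × Fin l)
    (v : ℤ × ℤ) :
    (∑ p', bvec l p' * iota l (c p')).coeff (p.1 + l * v.1, p.2 + l * v.2) = (c p).coeff v := by
  rw [coeff_sum, Finsupp.finsetSum_apply, Finset.sum_eq_single_of_mem p (Finset.mem_univ p)]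
  · rw [bvec, mono, coeff_single_mul_apply, one_mul]
    convert coeff_iota_mul hl (c p) v using 2
    ext <;> simp
  · intro p' _ hp'
    rw [bvec, mono, coeff_single_mul_apply, coeff_iota_of_notMem, mul_zero]
    rintro w hw
    simp only [Prod.ext_iff, Prod.fst_add, Prod.snd_add, Prod.fst_neg, Prod.snd_neg] at hw
    exact hp' (Prod.ext (Fin.eq_of_sub_eq_mul (k := v.1 - w.1) (by linear_combination hw.1))
      (Fin.eq_of_sub_eq_mul (k := v.2 - w.2) (by linear_combination hw.2)))

lemma RepBy.coeff_apply (hl : 0 < l) (hT : RepBy l T g) (p q : Fin l × Fin l) (v : ℤ × ℤ) :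
    (T p q).coeff v = g.coeff (p.1 + l * v.1 - q.1, p.2 + l * v.2 - q.2) := by
  rw [← coeff_sum_bvec_mul_iota hl (fun p' => T p' q), hT q, bvec, coeff_mul_mono]

lemma RepBy.dag (hl : 0 < l) (hT : RepBy l T g) : RepBy l (dag T) (bar g) := by
  intro q
  ext ⟨w₁, w₂⟩
  obtain ⟨i, k₁, rfl⟩ := Fin.exists_eq_add_mul hl w₁
  obtain ⟨j, k₂, rfl⟩ := Fin.exists_eq_add_mul hl w₂
  rw [coeff_sum_bvec_mul_iota hl (fun p => _root_.dag T p q) (i, j) (k₁, k₂)]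
  simp only [_root_.dag, transpose_apply, map_apply, coeff_bar, hT.coeff_apply hl, bvec,
    coeff_mul_mono]
  congr 1
  ext <;> simp <;> ring

end RepBy

section Phi

variable {l : ℕ} {T : Matrix (Fin l × Fin l) (Fin l × Fin l) R2} {g : R2}

lemma phi_eq_vecMul_dotProduct (M : Matrix (Fin l × Fin l) (Fin l × Fin l) R2) :
    phi l M = (bvec l ᵥ* M.map (iota l)) ⬝ᵥ fun q => bar (bvec l q) := by
  simp only [phi, dotProduct, vecMul, map_apply, Finset.sum_mul]
  exact Finset.sum_comm

lemma map_iota_mul (M N : Matrix (Fin l × Fin l) (Fin l × Fin l) R2) :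
    (M * N).map (iota l) = M.map (iota l) * N.map (iota l) := Matrix.map_mul

lemma phi_add (M N : Matrix (Fin l × Fin l) (Fin l × Fin l) R2) :
    phi l (M + N) = phi l M + phi l N := by
  simp only [phi_eq_vecMul_dotProduct, Matrix.map_add _ (iota_add l), vecMul_add, add_dotProduct]

lemma phi_one (hl : Odd l) : phi l (1 : Matrix (Fin l × Fin l) (Fin l × Fin l) R2) = 1 := by
  have hb : ∀ p, bvec l p * bar (bvec l p) = 1 := fun p => by
    rw [bvec, bar_mono, mono_mul_mono_neg]
  rw [phi_eq_vecMul_dotProduct, Matrix.map_one _ (iota_zero l) (iota_one l), vecMul_one,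
    dotProduct, Finset.sum_congr rfl fun p _ => hb p, Finset.sum_const, Finset.card_univ,
    Fintype.card_prod, Fintype.card_fin, nsmul_one, CharP.cast_eq_mod R2 2,
    Nat.odd_iff.mp (hl.mul hl), Nat.cast_one]

lemma phi_mul_of_repBy (hT : RepBy l T g) (M : Matrix (Fin l × Fin l) (Fin l × Fin l) R2) :
    phi l (T * M) = g * phi l M := by
  have hb : bvec l ᵥ* T.map (iota l) = g • bvec l := funext hT
  rw [phi_eq_vecMul_dotProduct, phi_eq_vecMul_dotProduct, map_iota_mul, ← vecMul_vecMul, hb,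
    smul_vecMul, smul_dotProduct, smul_eq_mul]

lemma phi_dag (M : Matrix (Fin l × Fin l) (Fin l × Fin l) R2) : phi l (dag M) = bar (phi l M) := by
  rw [phi, phi, bar_sum, Finset.sum_comm]
  refine Finset.sum_congr rfl fun q _ => ?_
  rw [bar_sum]
  refine Finset.sum_congr rfl fun p _ => ?_
  simp only [dag, transpose_apply, map_apply, bar_mul, bar_bar, iota_bar]
  ring

lemma phi_mul_dag (hT : RepBy l T g) (M : Matrix (Fin l × Fin l) (Fin l × Fin l) R2) :
    phi l (M * dag T) = phi l M * bar g := by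
  calc phi l (M * dag T) = phi l (dag (T * dag M)) := by rw [dag_mul, dag_dag]
    _ = phi l M * bar g := by
      rw [phi_dag, phi_mul_of_repBy hT, phi_dag, bar_mul, bar_bar, mul_comm]

lemma phi_eq_of_mul_eq_one (hl : Odd l) {a b : ℤ} {U V : Matrix (Fin l × Fin l) (Fin l × Fin l) R2}
    (hU : RepBy l U (mono a b)) (hUV : U * V = 1) : phi l V = mono (-a) (-b) := by
  have h := phi_mul_of_repBy hU V
  rw [hUV, phi_one hl] at h
  exact (left_inv_eq_right_inv (mul_comm (mono a b) _ ▸ mono_mul_mono_neg a b) h.symm).symm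

end Phi

lemma eq_mul_of_add_mul_eq_add_mul {R : Type*} [CommRing R] [NoZeroDivisors R] {y y' p p' : R}
    (hy : y * y' = 1) (hy₀ : 1 + y ≠ 0) (h : p + p * y' = p' + y * p') : p = y * p' := by
  have : (1 + y) * (p - y * p') = 0 := by linear_combination y * h - p * hy
  exact sub_eq_zero.mp ((mul_eq_zero.mp this).resolve_left hy₀)

lemma phi_eq_mono_mul_bar_of_hermitian {l : ℕ} {s t : ℤ} (hst : (s, t) ≠ 0)
    {T M : Matrix (Fin l × Fin l) (Fin l × Fin l) R2} (hT : RepBy l T (mono s t))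
    (hM : M * (1 + dag T) = (1 + T) * dag M) : phi l M = mono s t * bar (phi l M) := by
  have h := congrArg (phi l) hM
  rw [mul_add, add_mul, mul_one, one_mul, phi_add, phi_add, phi_mul_dag hT, phi_mul_of_repBy hT,
    phi_dag, bar_mono] at h
  exact eq_mul_of_add_mul_eq_add_mul (mono_mul_mono_neg s t) (one_add_mono_ne_zero hst) h

lemma one_add_mul_phi_add_one_add_mul_phi_eq {l : ℕ} (hl : Odd l) {a b : ℤ}
    {Tx Ty U V P Q : Matrix (Fin l × Fin l) (Fin l × Fin l) R2}
    (hx : RepBy l Tx (mono 1 0)) (hy : RepBy l Ty (mono 0 1)) (hU : RepBy l U (mono a b))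
    (hUV : U * V = 1) (hq : phi l Q = mono 1 0 * bar (phi l Q))
    (hoff : Ty * V + P * (1 + dag Tx) = dag Tx * U + (1 + Ty) * dag Q) :
    (1 + mono 1 0) * phi l P + (1 + mono 0 1) * phi l Q
      = mono a b + mono 1 0 * mono 0 1 * mono (-a) (-b) := by
  have hU₁ : phi l U = mono a b := by simpa [phi_one hl] using phi_mul_of_repBy hU 1
  have h := congrArg (phi l) hoff
  rw [mul_add, add_mul, mul_one, one_mul, phi_add, phi_add, phi_add, phi_add,
    phi_mul_of_repBy hy, phi_mul_dag hx, phi_mul_of_repBy (hx.dag hl.pos), phi_mul_of_repBy hy,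
    phi_dag, hU₁, phi_eq_of_mul_eq_one hl hU hUV, bar_mono] at h
  linear_combination mono 1 0 * h - (phi l P - mono a b) * mono_mul_mono_neg 1 0
    + (1 + mono 0 1) * hq
    + ((1 + mono 0 1) * mono 1 0 * bar (phi l Q) - mono 1 0 * mono 0 1 * mono (-a) (-b))
      * CharTwo.two_eq_zero (R := R2)

noncomputable def coeffPairing (w : ℤ × ℤ → ZMod 2) : R2 →+ ZMod 2 :=
  (Finsupp.liftAddHom fun v => AddMonoidHom.mulLeft (w v)).comp coeffAddEquiv.toAddMonoidHom

lemma coeffPairing_single (w : ℤ × ℤ → ZMod 2) (v : ℤ × ℤ) (r : ZMod 2) :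
    coeffPairing w (single v r) = w v * r := by
  simp [coeffPairing, coeffAddEquiv]

lemma coeffPairing_zero : coeffPairing 0 = 0 :=
  addMonoidHom_ext fun v r => by simp [coeffPairing_single]

lemma coeffPairing_add (w w' : ℤ × ℤ → ZMod 2) :
    coeffPairing (w + w') = coeffPairing w + coeffPairing w' :=
  addMonoidHom_ext fun v r => by simp [coeffPairing_single, add_mul]

lemma coeffPairing_mono_mul (w : ℤ × ℤ → ZMod 2) (s t : ℤ) (f : R2) :
    coeffPairing w (mono s t * f) = coeffPairing (fun v => w ((s, t) + v)) f := by
  have h : (coeffPairing w).comp (AddMonoidHom.mulLeft (mono s t)) =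
      coeffPairing fun v => w ((s, t) + v) :=
    addMonoidHom_ext fun v r => by simp [mono, single_mul_single, coeffPairing_single]
  exact DFunLike.congr_fun h f

lemma coeffPairing_bar (w : ℤ × ℤ → ZMod 2) (f : R2) :
    coeffPairing w (bar f) = coeffPairing (fun v => w (-v)) f := by
  have h : (coeffPairing w).comp (AddMonoidHom.mk' bar bar_add) = coeffPairing fun v => w (-v) :=
    addMonoidHom_ext fun v r => by simp [bar_single, coeffPairing_single]
  exact DFunLike.congr_fun h f

lemma coeffPairing_one_add_mono_mul (w : ℤ × ℤ → ZMod 2) (s t : ℤ) (f : R2) :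
    coeffPairing w ((1 + mono s t) * f) = coeffPairing (fun v => w v + w ((s, t) + v)) f := by
  rw [add_mul, one_mul, map_add, coeffPairing_mono_mul, ← AddMonoidHom.add_apply,
    ← coeffPairing_add]
  rfl

lemma coeffPairing_eq_zero_of_eq_mono_mul_bar (w : ℤ × ℤ → ZMod 2) {s t : ℤ} {p : R2}
    (hp : p = mono s t * bar p) : coeffPairing (fun v => w v + w ((s, t) - v)) p = 0 := by
  have hreflect : coeffPairing (fun v => w ((s, t) - v)) p = coeffPairing w p := by
    conv_lhs => rw [hp]
    rw [coeffPairing_mono_mul, coeffPairing_bar]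
    simp
  rw [show (fun v => w v + w ((s, t) - v)) = w + fun v => w ((s, t) - v) from rfl,
    coeffPairing_add, AddMonoidHom.add_apply, hreflect, CharTwo.add_self_eq_zero]

theorem one_add_mul_add_one_add_mul_ne (a b : ℤ) {p q : R2} (hp : p = mono 0 1 * bar p) :
    (1 + mono 1 0) * p + (1 + mono 0 1) * q ≠ mono a b + mono 1 0 * mono 0 1 * mono (-a) (-b) := by
  let halfPlane : ℤ × ℤ → ZMod 2 := fun v => if 1 ≤ v.1 then 1 else 0
  let ray : ℤ × ℤ → ZMod 2 := fun v => if v.1 = 0 ∧ 1 ≤ v.2 then 1 else 0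
  have hx : (fun v => halfPlane v + halfPlane ((1, 0) + v)) =
      fun v => ray v + ray ((0, 1) - v) := by
    funext v
    simp only [halfPlane, ray, Prod.fst_add, Prod.snd_sub, Prod.fst_sub]
    split_ifs <;> first | rfl | omega
  have hy : (fun v => halfPlane v + halfPlane ((0, 1) + v)) = 0 := by
    funext v
    simp only [halfPlane, Prod.fst_add, zero_add, CharTwo.add_self_eq_zero, Pi.zero_apply]
  intro h
  have := congrArg (coeffPairing halfPlane) h
  rw [map_add, coeffPairing_one_add_mono_mul, coeffPairing_one_add_mono_mul, hx, hy,
    coeffPairing_eq_zero_of_eq_mono_mul_bar ray hp, coeffPairing_zero, mono_mul, mono_mul,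
    map_add, mono, mono, coeffPairing_single, coeffPairing_single] at this
  simp only [halfPlane] at this
  split_ifs at this <;> first | omega | simp at this

theorem odd_supercell_no_go_general (l : ℕ) (hl : Odd l) (a b : ℤ)
    (Tx Ty U V P Q : Matrix (Fin l × Fin l) (Fin l × Fin l) R2)
    (hx : RepBy l Tx (mono 1 0)) (hy : RepBy l Ty (mono 0 1))
    (hU : RepBy l U (mono a b)) (hUV : U * V = 1)
    (hP : P * (1 + dag Ty) = (1 + Ty) * dag P)
    (hQ : Q * (1 + dag Tx) = (1 + Tx) * dag Q)
    (hoff : Ty * V + P * (1 + dag Tx) = dag Tx * U + (1 + Ty) * dag Q) :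
    (phi l P = mono 0 1 * bar (phi l P) ∧
     phi l Q = mono 1 0 * bar (phi l Q) ∧
     (1 + mono 1 0) * phi l P + (1 + mono 0 1) * phi l Q
       = mono a b + mono 1 0 * mono 0 1 * mono (-a) (-b)) ∧
    False := by
  have hp := phi_eq_mono_mul_bar_of_hermitian (by simp) hy hP
  have hq := phi_eq_mono_mul_bar_of_hermitian (by simp) hx hQ
  have hsum := one_add_mul_phi_add_one_add_mul_phi_eq hl hx hy hU hUV hq hoff
  exact ⟨⟨hp, hq, hsum⟩, one_add_mul_add_one_add_mul_ne a b hp hsum⟩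

/-- Odd-supercell no-go: if `P, Q` over `R_l` satisfy the Hermiticity and off-diagonal
conditions forced by an exact Clifford `ℤ₂` electromagnetic duality, then `p = φ(P)`,
`q = φ(Q)` satisfy `p = y·p̄`, `q = x·q̄`, and `(1+x)p + (1+y)q = u + xy·u⁻¹`; consequently
no such `P, Q` exist. -/
theorem odd_supercell_no_go (l : ℕ) (hl : Odd l) (a b : ℤ)
    (Tx Ty U V P Q : Matrix (Fin l × Fin l) (Fin l × Fin l) R2)
    (hx : RepBy l Tx (mono 1 0)) (hy : RepBy l Ty (mono 0 1))
    (hU : RepBy l U (mono a b)) (hUV : U * V = 1) (hVU : V * U = 1)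
    (hP : P * (1 + dag Ty) = (1 + Ty) * dag P)
    (hQ : Q * (1 + dag Tx) = (1 + Tx) * dag Q)
    (hoff : Ty * V + P * (1 + dag Tx) = dag Tx * U + (1 + Ty) * dag Q) :
    (phi l P = mono 0 1 * bar (phi l P) ∧
     phi l Q = mono 1 0 * bar (phi l Q) ∧
     (1 + mono 1 0) * phi l P + (1 + mono 0 1) * phi l Q
       = mono a b + mono 1 0 * mono 0 1 * mono (-a) (-b)) ∧
    False :=
  odd_supercell_no_go_general l hl a b Tx Ty U V P Q hx hy hU hUV hP hQ hoff
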